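/- arXiv:1906.05757 — 8 statements merged into one kernel-verified Lean document; each statement's English description precedes it below -/
import Mathlib

section
/- Let A be an m×n matrix over a field F, B an m'×n matrix, and C an m'×n' matrix. Let I ⊆ {1,...,n} be the set of indices of non-zero columns of B. If I is not a relation of A (i.e., there is no row vector y ∈ F^m with ∅ ≠ supp(yA) ⊆ I), then nul(A) − nul([[A,0],[B,C]]) = rank([B C]) − n', where nul denotes the nullity (dimension of the kernel) of the matrix acting on column vectors. -/
/-!
Both nullities are the number of columns minus the rank, so the identity amounts to
`rank [[A, 0], [B, C]] = rank A + rank [B C]`. The rows of the block matrix are the rows of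
`[A 0]` together with those of `[B C]`, and these two row spaces meet only in `0`: if
`(y A, 0) = (z B, z C)`, then `y A = z B` is a combination of rows of `A` supported on the
non-zero columns `I` of `B`, hence zero because `I` is not a relation of `A`.
-/

/-- `I` is a relation of `A`: some linear combination `y` of the rows of `A`
has nonempty support contained in `I`. -/
def IsRelation {F : Type*} [Field F] {m n : Type*} [Fintype m]
    (A : Matrix m n F) (I : Set n) : Prop :=
  ∃ y : m → F, (Function.support (Matrix.vecMul y A)).Nonempty ∧
    Function.support (Matrix.vecMul y A) ⊆ I

/-- The nullity of a matrix: the dimension of its kernel acting on column vectors. -/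
noncomputable def nullity {F : Type*} [Field F] {m n : Type*} [Fintype m] [Fintype n]
    (A : Matrix m n F) : ℕ :=
  Module.finrank F (LinearMap.ker A.mulVecLin)

open Matrix Submodule Set Module

namespace Matrix

variable {F : Type*} [Field F] {m m' n n' : Type*}

theorem rank_fromRows_of_disjoint [Fintype m] [Fintype m'] [Fintype n]
    (P : Matrix m n F) (R : Matrix m' n F)
    (h : Disjoint (span F (range P.row)) (span F (range R.row))) :
    (fromRows P R).rank = P.rank + R.rank := by
  rw [rank_eq_finrank_span_row, rank_eq_finrank_span_row, rank_eq_finrank_span_row,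
    ← Submodule.finrank_sup_add_finrank_inf_eq, h.eq_bot, finrank_bot, add_zero, ← span_union,
    ← Set.Sum.elim_range]
  rfl

theorem rank_fromCols_zero [Fintype m] [Fintype n] [Fintype n'] (A : Matrix m n F) :
    (fromCols A (0 : Matrix m n' F)).rank = A.rank := by
  classical
  refine le_antisymm ?_ ?_
  · calc (fromCols A (0 : Matrix m n' F)).rank
          = (A * fromCols (1 : Matrix n n F) (0 : Matrix n n' F)).rank := by
          rw [mul_fromCols, Matrix.mul_one, Matrix.mul_zero]
      _ ≤ A.rank := rank_mul_le_left _ _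
  · calc A.rank
          = (fromCols A (0 : Matrix m n' F) *
              fromRows (1 : Matrix n n F) (0 : Matrix n' n F)).rank := by
          rw [fromCols_mul_fromRows, Matrix.mul_one, Matrix.mul_zero, add_zero]
      _ ≤ _ := rank_mul_le_left _ _

theorem support_vecMul_subset [Fintype m] (z : m → F) (B : Matrix m n F) :
    Function.support (z ᵥ* B) ⊆ {j | ∃ i, B i j ≠ 0} := by
  intro j hj
  by_contra! hB
  simp only [Set.mem_ofPred_eq, not_exists, not_not] at hB
  exact hj (by simp [vecMul, dotProduct, hB])

theorem disjoint_span_row_fromCols_of_not_isRelation [Fintype m] [Fintype m']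
    {A : Matrix m n F} {B : Matrix m' n F} (C : Matrix m' n' F)
    (hrel : ¬ IsRelation A {j | ∃ i, B i j ≠ 0}) :
    Disjoint (span F (range (fromCols A (0 : Matrix m n' F)).row))
      (span F (range (fromCols B C).row)) := by
  rw [← range_vecMulLinear, ← range_vecMulLinear, Submodule.disjoint_def]
  rintro _ ⟨y, rfl⟩ ⟨z, hz⟩
  simp only [vecMulLinear_apply, vecMul_fromCols] at hz ⊢
  have hyA : y ᵥ* A = 0 := by
    by_contra hne
    have hzB : z ᵥ* B = y ᵥ* A := congrArg (· ∘ Sum.inl) hz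
    exact hrel ⟨y, Function.support_nonempty_iff.2 hne, hzB ▸ support_vecMul_subset z B⟩
  ext (j | j) <;> simp [hyA]

theorem rank_fromBlocks_zero_of_not_isRelation [Fintype m] [Fintype m'] [Fintype n]
    [Fintype n'] {A : Matrix m n F} {B : Matrix m' n F} {C : Matrix m' n' F}
    (hrel : ¬ IsRelation A {j | ∃ i, B i j ≠ 0}) :
    (fromBlocks A 0 B C).rank = A.rank + (fromCols B C).rank := by
  rw [← fromRows_fromCols_eq_fromBlocks,
    rank_fromRows_of_disjoint _ _ (disjoint_span_row_fromCols_of_not_isRelation C hrel),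
    rank_fromCols_zero]

end Matrix

theorem nullity_add_rank {F : Type*} [Field F] {m n : Type*} [Fintype m] [Fintype n]
    (A : Matrix m n F) : nullity A + A.rank = Fintype.card n := by
  rw [nullity, Matrix.rank, add_comm, LinearMap.finrank_range_add_finrank_ker,
    Module.finrank_fintype_fun_eq_card]

theorem stmt_0 {F : Type*} [Field F] {m n m' n' : ℕ}
    (A : Matrix (Fin m) (Fin n) F) (B : Matrix (Fin m') (Fin n) F)
    (C : Matrix (Fin m') (Fin n') F)
    (I : Set (Fin n)) (hI : I = {j | ∃ i, B i j ≠ 0})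
    (hrel : ¬ IsRelation A I) :
    (nullity A : ℤ) - nullity (Matrix.fromBlocks A 0 B C)
      = ((Matrix.fromCols B C).rank : ℤ) - n' := by
  subst hI
  have hA := nullity_add_rank A
  have hM := nullity_add_rank (fromBlocks A 0 B C)
  rw [rank_fromBlocks_zero_of_not_isRelation hrel] at hM
  simp only [Fintype.card_sum, Fintype.card_fin] at hA hM
  omega
end

section
/- Let A be an m×n matrix over a field F, B an m'×n matrix, C an m'×n' matrix, and I the set of indices of non-zero columns of B. Let F(A) be the set of frozen indices of A, i.e., indices i such that {i} is a relation of A. Let B* be obtained from B by replacing, for each i ∈ I ∩ F(A), the i-th column of B by zero. If I \ F(A) is not a relation of A, then nul([[A,0],[B,C]]) − nul(A) = n' − rank([B* C]). -/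
/-!
Vectors in the kernel of `A` vanish at frozen indices, so `B` and `B*` agree on `ker A` and the
kernel of `[[A, 0], [B, C]]` is `{(x, z) | A x = 0, B* x + C z = 0}`. The hypothesis forces
`B* (ker A)` to be the whole column space of `B*`: a row vector `y` with `y B*` vanishing on `ker A`
makes `y B* = z A` for some `z`, and the support of `z A` lies in `I \ F(A)`, so `z A = 0`.
Hence `(x, z) ↦ B* x + C z` maps `ker A × F^n'` onto the column space of `[B* C]`, and
rank–nullity for this map is the claimed identity.
-/

open scoped Classical

/-- The set of frozen indices of `A`: those `i` with `{i}` a relation of `A`. -/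
def frozen {F : Type*} [Field F] {m n : Type*} [Fintype m]
    (A : Matrix m n F) : Set n :=
  {i | IsRelation A {i}}

open Matrix

section

variable {F : Type*} [Field F] {m n m' n' : Type*} [Fintype m] [Fintype n]

theorem apply_eq_zero_of_mem_frozen {A : Matrix m n F} {x : n → F} (hx : A *ᵥ x = 0) {j : n}
    (hj : j ∈ frozen A) : x j = 0 := by
  obtain ⟨y, ⟨k, hk⟩, hsupp⟩ := hj
  obtain rfl : k = j := hsupp hk
  have hsingle : y ᵥ* A = Pi.single k ((y ᵥ* A) k) := by
    ext i
    by_cases hi : i = k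
    · subst hi; simp
    · simpa [hi] using Function.notMem_support.mp fun h => hi (hsupp h)
  have : (y ᵥ* A) k * x k = 0 := by
    rw [← single_dotProduct, ← hsingle, ← dotProduct_mulVec, hx, dotProduct_zero]
  exact (mul_eq_zero.mp this).resolve_left hk

theorem mulVec_eq_of_eq_off_frozen {A : Matrix m n F} {B B' : Matrix m' n F}
    (hBB' : ∀ i j, j ∉ frozen A → B i j = B' i j) {x : n → F} (hx : A *ᵥ x = 0) :
    B *ᵥ x = B' *ᵥ x := by
  ext i
  refine Finset.sum_congr rfl fun j _ => ?_
  by_cases hj : j ∈ frozen A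
  · simp [apply_eq_zero_of_mem_frozen hx hj]
  · exact congrArg (· * x j) (hBB' i j hj)

theorem exists_vecMul_eq_of_forall_dotProduct_eq_zero (A : Matrix m n F) {w : n → F}
    (hw : ∀ x, A *ᵥ x = 0 → w ⬝ᵥ x = 0) : ∃ z : m → F, z ᵥ* A = w := by
  have hmem : dotProductEquiv F n w ∈ LinearMap.range A.mulVecLin.dualMap := by
    rw [LinearMap.range_dualMap_eq_dualAnnihilator_ker, Submodule.mem_dualAnnihilator]
    exact fun x hx => hw x hx
  obtain ⟨ψ, hψ⟩ := hmem
  refine ⟨(dotProductEquiv F m).symm ψ, (dotProductEquiv F n).injective (LinearMap.ext fun x => ?_)⟩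
  rw [← hψ, dotProductEquiv_apply_apply, ← dotProduct_mulVec, LinearMap.dualMap_apply,
    mulVecLin_apply, ← dotProductEquiv_apply_apply, LinearEquiv.apply_symm_apply]

theorem vecMul_eq_zero_of_not_isRelation [Fintype m'] {A : Matrix m n F} {D : Matrix m' n F}
    {J : Set n} (hJ : ¬ IsRelation A J) (hD : ∀ j ∉ J, ∀ i, D i j = 0) {y : m' → F}
    (hy : ∀ x, A *ᵥ x = 0 → y ⬝ᵥ D *ᵥ x = 0) : y ᵥ* D = 0 := by
  obtain ⟨z, hz⟩ := exists_vecMul_eq_of_forall_dotProduct_eq_zero A (w := y ᵥ* D) fun x hx => by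
    rw [← dotProduct_mulVec]; exact hy x hx
  by_contra hne
  refine hJ ⟨z, hz ▸ Function.support_nonempty_iff.mpr hne, fun j hj => ?_⟩
  by_contra hjJ
  exact hj (by rw [hz]; simp [vecMul, dotProduct, hD j hjJ])

theorem range_mulVecLin_le_map_ker [Fintype m'] {A : Matrix m n F} {D : Matrix m' n F} {J : Set n}
    (hJ : ¬ IsRelation A J) (hD : ∀ j ∉ J, ∀ i, D i j = 0) :
    LinearMap.range D.mulVecLin ≤ (LinearMap.ker A.mulVecLin).map D.mulVecLin := by
  rw [← Subspace.dualAnnihilator_le_dualAnnihilator_iff]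
  intro g hg
  rw [Submodule.mem_dualAnnihilator] at hg ⊢
  have hg_eq : ∀ u, g u = (dotProductEquiv F m').symm g ⬝ᵥ u := fun u => by
    rw [← dotProductEquiv_apply_apply, LinearEquiv.apply_symm_apply]
  have hgD := vecMul_eq_zero_of_not_isRelation hJ hD fun x hx =>
    (hg_eq _).symm.trans (hg _ ⟨x, hx, rfl⟩)
  rintro _ ⟨v, rfl⟩
  rw [hg_eq, mulVecLin_apply, dotProduct_mulVec, hgD, zero_dotProduct]

theorem nullity_fromBlocks_add_rank_fromCols [Fintype m'] [Fintype n'] (A : Matrix m n F)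
    (B D : Matrix m' n F) (C : Matrix m' n' F) (hBD : ∀ x, A *ᵥ x = 0 → B *ᵥ x = D *ᵥ x)
    (hD : LinearMap.range D.mulVecLin ≤ (LinearMap.ker A.mulVecLin).map D.mulVecLin) :
    nullity (fromBlocks A 0 B C) + (fromCols D C).rank = nullity A + Fintype.card n' := by
  set K := LinearMap.ker A.mulVecLin with hK
  let ι : K × (n' → F) →ₗ[F] (n ⊕ n' → F) :=
    (LinearEquiv.sumArrowLequivProdArrow n n' F F).symm.toLinearMap ∘ₗ
      K.subtype.prodMap LinearMap.id
  have hι : ∀ p, ι p = Sum.elim p.1 p.2 := fun _ => rfl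
  have hι_inj : Function.Injective ι := fun p q h =>
    Prod.ext (Subtype.ext (congrArg (· ∘ Sum.inl) h)) (congrArg (· ∘ Sum.inr) h)
  let Φ := (fromCols D C).mulVecLin ∘ₗ ι
  have hrange : LinearMap.range Φ = LinearMap.range (fromCols D C).mulVecLin := by
    refine le_antisymm (LinearMap.range_comp_le_range _ _) ?_
    rintro _ ⟨u, rfl⟩
    obtain ⟨x, hx, hxu⟩ := hD ⟨u ∘ Sum.inl, rfl⟩
    rw [mulVecLin_apply, mulVecLin_apply] at hxu
    exact ⟨(⟨x, hx⟩, u ∘ Sum.inr), by simp [Φ, hι, fromCols_mulVec, hxu]⟩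
  have hker : (LinearMap.ker Φ).map ι = LinearMap.ker (fromBlocks A 0 B C).mulVecLin := by
    ext u
    constructor
    · rintro ⟨p, hp, rfl⟩
      have hA : A *ᵥ (p.1 : n → F) = 0 := p.1.2
      rw [SetLike.mem_coe, LinearMap.mem_ker] at hp
      rw [LinearMap.mem_ker]
      simp only [Φ, LinearMap.comp_apply, mulVecLin_apply, hι, fromCols_mulVec_sumElim] at hp ⊢
      rw [fromBlocks_mulVec]
      simp [hA, hBD _ hA, hp]
    · intro hu
      rw [LinearMap.mem_ker, mulVecLin_apply, fromBlocks_mulVec, zero_mulVec, add_zero] at hu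
      have hA : A *ᵥ (u ∘ Sum.inl) = 0 := congrArg (· ∘ Sum.inl) hu
      have hBC : B *ᵥ (u ∘ Sum.inl) + C *ᵥ (u ∘ Sum.inr) = 0 := congrArg (· ∘ Sum.inr) hu
      refine ⟨(⟨u ∘ Sum.inl, hA⟩, u ∘ Sum.inr), ?_, Sum.elim_comp_inl_inr u⟩
      rw [SetLike.mem_coe, LinearMap.mem_ker]
      simpa [Φ, hι, fromCols_mulVec_sumElim, ← hBD _ hA] using hBC
  have hdim := Φ.finrank_range_add_finrank_ker
  rw [hrange, (Submodule.equivMapOfInjective ι hι_inj _).finrank_eq, hker, Module.finrank_prod,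
    Module.finrank_fintype_fun_eq_card] at hdim
  rw [nullity, nullity, rank, ← hK]
  omega
end

theorem stmt_1 {F : Type*} [Field F] {m n m' n' : ℕ}
    (A : Matrix (Fin m) (Fin n) F) (B : Matrix (Fin m') (Fin n) F)
    (C : Matrix (Fin m') (Fin n') F)
    (I : Set (Fin n)) (hI : I = {j | ∃ i, B i j ≠ 0})
    (Bstar : Matrix (Fin m') (Fin n) F)
    (hBstar : ∀ i j, Bstar i j = if j ∈ I ∩ frozen A then 0 else B i j)
    (hrel : ¬ IsRelation A (I \ frozen A)) :
    (nullity (Matrix.fromBlocks A 0 B C) : ℤ) - nullity A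
      = (n' : ℤ) - (Matrix.fromCols Bstar C).rank := by
  have hB_eq : ∀ i j, j ∉ frozen A → B i j = Bstar i j := fun i j hj => by simp [hBstar, hj]
  have hBstar_zero : ∀ j ∉ I \ frozen A, ∀ i, Bstar i j = 0 := by
    intro j hj i
    by_cases hjI : j ∈ I
    · simp [hBstar, hjI, not_not.mp fun h => hj ⟨hjI, h⟩]
    · have hBij : B i j = 0 := not_not.mp fun h => hjI (hI ▸ ⟨i, h⟩)
      simp [hBstar, hjI, hBij]
  have key := nullity_fromBlocks_add_rank_fromCols A B Bstar C
    (fun _ hx => mulVec_eq_of_eq_off_frozen hB_eq hx) (range_mulVecLin_le_map_ker hrel hBstar_zero)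
  rw [Fintype.card_fin] at key
  omega
end

section
/- Let A be an m×n matrix over a field F and suppose B_1,...,B_{m'} ∈ F^{1×n} are row vectors such that B_1,...,B_r are linearly independent, where r = rank of the matrix B with rows B_1,...,B_{m'}. If the set I of indices of non-zero columns of B is not a relation of A, then nul(A) − nul([A; B]) = rank(B), where [A; B] denotes the matrix obtained by stacking B below A. -/
theorem stmt_2 {F : Type*} [Field F] {m n m' : ℕ}
    (A : Matrix (Fin m) (Fin n) F) (B : Matrix (Fin m') (Fin n) F)
    (hle : B.rank ≤ m')
    (hind : LinearIndependent F fun i : Fin B.rank => B (Fin.castLE hle i))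
    (I : Set (Fin n)) (hI : I = {j | ∃ i, B i j ≠ 0})
    (hrel : ¬ IsRelation A I) :
    (nullity A : ℤ) - nullity (Matrix.fromRows A B) = B.rank := by
  classical
  subst hI
  set K := LinearMap.ker A.mulVecLin with hK
  -- kernel of the stacked matrix
  have hker : LinearMap.ker (Matrix.fromRows A B).mulVecLin
      = K ⊓ LinearMap.ker B.mulVecLin := by
    ext x
    simp only [LinearMap.mem_ker, Submodule.mem_inf, Matrix.mulVecLin_apply,
      Matrix.fromRows_mulVec, hK]
    constructor
    · intro h
      exact ⟨funext fun i => congrFun h (Sum.inl i), funext fun i => congrFun h (Sum.inr i)⟩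
    · rintro ⟨h1, h2⟩
      funext i
      cases i with
      | inl i => simpa using congrFun h1 i
      | inr i => simpa using congrFun h2 i
  -- key: B maps ker A onto range B
  have hmap : Submodule.map B.mulVecLin K = LinearMap.range B.mulVecLin := by
    refine le_antisymm (fun w hw => by
      obtain ⟨x, -, rfl⟩ := hw; exact ⟨x, rfl⟩) ?_
    by_contra hlt
    obtain ⟨w, hwr, hw⟩ := SetLike.not_le_iff_exists.mp hlt
    obtain ⟨φ, hφ1, hφ2⟩ :=
      Submodule.exists_dual_map_eq_bot_of_notMem (p := Submodule.map B.mulVecLin K) hw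
        inferInstance
    have hφK : ∀ x ∈ K, φ (B.mulVecLin x) = 0 := by
      intro x hx
      have : φ (B.mulVecLin x) ∈ (Submodule.map B.mulVecLin K).map φ :=
        Submodule.mem_map_of_mem (Submodule.mem_map_of_mem hx)
      rwa [hφ2, Submodule.mem_bot] at this
    set z : Fin m' → F := fun i => φ (fun j => if i = j then 1 else 0) with hz
    have hφ_eq : ∀ w, φ w = dotProduct z w := by
      intro w
      rw [LinearMap.pi_apply_eq_sum_univ φ w, dotProduct]
      exact Finset.sum_congr rfl fun i _ => by rw [smul_eq_mul, mul_comm]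
    set c : Fin n → F := Matrix.vecMul z B with hc
    have hcdot : ∀ x, dotProduct c x = φ (B.mulVecLin x) := by
      intro x
      rw [hφ_eq, Matrix.mulVecLin_apply, Matrix.dotProduct_mulVec]
    -- the functional x ↦ Matrix.dotProduct c x is φ ∘ B, it vanishes on K = ker A
    set φc : (Fin n → F) →ₗ[F] F := φ.comp B.mulVecLin with hφc
    have hKle : K ≤ LinearMap.ker φc := fun x hx => by
      simpa [φc] using hφK x hx
    set T := A.mulVecLin with hT
    set q : ((Fin n → F) ⧸ K) →ₗ[F] F := Submodule.liftQ K φc hKle with hq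
    set ψ0 : LinearMap.range T →ₗ[F] F :=
      q.comp (T.quotKerEquivRange.symm : LinearMap.range T →ₗ[F] ((Fin n → F) ⧸ K)) with hψ0
    obtain ⟨ψ, hψ⟩ := LinearMap.exists_extend ψ0
    have key : ∀ x, ψ (T x) = dotProduct c x := by
      intro x
      have h1 : ψ (T x) = ψ0 ⟨T x, LinearMap.mem_range_self T x⟩ := by
        rw [← hψ]; rfl
      rw [h1, hψ0, LinearMap.comp_apply, LinearEquiv.coe_coe,
        T.quotKerEquivRange_symm_apply_image, Submodule.mkQ_apply, hq,
        Submodule.liftQ_apply]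
      rw [hcdot]
      rfl
    set y : Fin m → F := fun i => ψ (fun j => if i = j then 1 else 0) with hy
    have hψ_eq : ∀ w, ψ w = dotProduct y w := by
      intro w
      rw [LinearMap.pi_apply_eq_sum_univ ψ w, dotProduct]
      exact Finset.sum_congr rfl fun i _ => by rw [smul_eq_mul, mul_comm]
    have hyA : Matrix.vecMul y A = c := by
      funext j
      have := key (Pi.single j 1)
      rw [hψ_eq, hT, Matrix.mulVecLin_apply, Matrix.dotProduct_mulVec] at this
      simpa [dotProduct_single] using this
    apply hrel
    refine ⟨y, ?_, ?_⟩
    · -- support nonempty: c ≠ 0 since φ w ≠ 0, w ∈ range B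
      obtain ⟨v, rfl⟩ := hwr
      have : dotProduct c v ≠ 0 := by rw [hcdot]; exact hφ1
      obtain ⟨j, hj⟩ : ∃ j, c j ≠ 0 := by
        by_contra h
        push_neg at h
        apply this
        simp [dotProduct, h]
      exact ⟨j, by simp [hyA, hj]⟩
    · intro j hj
      rw [Function.mem_support, hyA] at hj
      by_contra hmem
      simp only [Set.mem_setOf_eq, not_exists, not_not] at hmem
      apply hj
      simp [hc, Matrix.vecMul, dotProduct, hmem]
  -- rank-nullity on B restricted to K
  have hrank : Module.finrank F K = B.rank
      + Module.finrank F ((K ⊓ LinearMap.ker B.mulVecLin :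
          Submodule F (Fin n → F))) := by
    have h1 := LinearMap.finrank_range_add_finrank_ker (B.mulVecLin.domRestrict K)
    rw [LinearMap.range_domRestrict, hmap, LinearMap.ker_domRestrict] at h1
    have h2 : Submodule.comap K.subtype (LinearMap.ker B.mulVecLin)
        = Submodule.comap K.subtype (K ⊓ LinearMap.ker B.mulVecLin) := by
      ext x; simp
    have h3 : Module.finrank F (Submodule.comap K.subtype
        (K ⊓ LinearMap.ker B.mulVecLin)) = Module.finrank F
        ((K ⊓ LinearMap.ker B.mulVecLin : Submodule F (Fin n → F))) :=
      (Submodule.comapSubtypeEquivOfLe inf_le_left).finrank_eq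
    rw [h2, h3] at h1
    rw [Matrix.rank, ← h1]
  have e1 : nullity A = Module.finrank F K := rfl
  have e2 : nullity (Matrix.fromRows A B) = Module.finrank F
      ((K ⊓ LinearMap.ker B.mulVecLin : Submodule F (Fin n → F))) := by
    rw [nullity, hker]
  rw [e1, e2, hrank]
  push_cast
  ring
end

section
/- Let A be an m×n matrix over a finite field F_q, and let Σ be a uniformly random element of ker(A) ⊆ F_q^n. Suppose I ⊆ {1,...,n} is disjoint from the set F(A) of frozen indices of A and is not a relation of A. Then the coordinates (Σ_i)_{i∈I} are mutually independent and each Σ_i for i ∈ I is uniformly distributed on F_q; in particular, for all τ ∈ F_q^I, P(∀i∈I: Σ_i = τ_i) = ∏_{i∈I} P(Σ_i = τ_i). -/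
open scoped Classical

/-!
Since `I` is not a relation, no nonzero vector supported on `I` lies in the row space of `A`,
which by duality is the annihilator of `ker A`; hence restriction to the coordinates in `I`
maps `ker A` onto `F^I`. Its fibres are translates of one another, so each has
`|ker A| / q^|I|` elements. Taking `I = {i}` (allowed since `i` is not frozen) gives uniformity
of each coordinate, and the product formula follows.
-/

open Finset Matrix

section Counting

variable {G H P : Type*} [AddGroup G] [Fintype G] [AddGroup H] [AddGroup P] [Fintype P]

theorem AddMonoidHom.card_filter_eq_eq_card_ker (f : G →+ H) (x₀ : G) :
    #{x | f x = f x₀} = #{x | f x = 0} :=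
  card_bij' (fun x _ => x - x₀) (fun y _ => y + x₀)
    (fun x hx => by simp_all) (fun y hy => by simp_all) (fun x _ => by simp) (fun y _ => by simp)

theorem card_filter_mul_card_eq_of_forall_exists (f : G →+ H) (g : G →+ P)
    (hg : ∀ p, ∃ x, f x = 0 ∧ g x = p) (p : P) :
    #{x | f x = 0 ∧ g x = p} * Fintype.card P = #{x | f x = 0} := by
  have hfiber : ∀ p, #{x | f x = 0 ∧ g x = p} = #{x | f x = 0 ∧ g x = 0} := by
    intro p
    obtain ⟨x₀, hx₀, rfl⟩ := hg p
    simpa [Prod.ext_iff, hx₀] using (f.prod g).card_filter_eq_eq_card_ker x₀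
  calc #{x | f x = 0 ∧ g x = p} * Fintype.card P
      = ∑ p' : P, #{x ∈ ({x | f x = 0} : Finset G) | g x = p'} := by
        simp [filter_filter, hfiber p, hfiber _, mul_comm]
    _ = #{x | f x = 0} := (card_eq_sum_card_fiberwise fun _ _ => mem_univ _).symm

end Counting

section RowSpace

variable {F : Type*} [Field F] {m n : Type*} [Fintype m] [Fintype n]

theorem Matrix.exists_vecMul_dotProduct_eq_of_ker_le (A : Matrix m n F)
    {φ : Module.Dual F (n → F)} (hφ : LinearMap.ker A.mulVecLin ≤ LinearMap.ker φ) :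
    ∃ y : m → F, ∀ x, y ᵥ* A ⬝ᵥ x = φ x := by
  have hann : φ ∈ (LinearMap.ker A.mulVecLin).dualAnnihilator :=
    (Submodule.mem_dualAnnihilator φ).2 fun x hx => hφ hx
  rw [← LinearMap.range_dualMap_eq_dualAnnihilator_ker] at hann
  obtain ⟨ψ, rfl⟩ := hann
  refine ⟨(dotProductEquiv F m).symm ψ, fun x => ?_⟩
  rw [← dotProduct_mulVec]
  conv_rhs => rw [LinearMap.dualMap_apply, ← (dotProductEquiv F m).apply_symm_apply ψ]
  rfl

theorem Matrix.exists_mulVec_eq_zero_and_restrict_eq (A : Matrix m n F) {I : Set n}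
    (hI : ¬ IsRelation A I) (t : I → F) : ∃ x, A *ᵥ x = 0 ∧ ∀ i : I, x i = t i := by
  set π : (n → F) →ₗ[F] (I → F) := LinearMap.funLeft F F Subtype.val
  suffices hsurj : (LinearMap.ker A.mulVecLin).map π = ⊤ by
    obtain ⟨x, hx, hπx⟩ := hsurj ▸ Submodule.mem_top (x := t)
    exact ⟨x, hx, fun i => congrFun hπx i⟩
  by_contra hne
  obtain ⟨φ, hφ0, hφ⟩ := Submodule.exists_le_ker_of_lt_top _ (lt_top_iff_ne_top.2 hne)
  obtain ⟨y, hy⟩ := A.exists_vecMul_dotProduct_eq_of_ker_le (φ := φ ∘ₗ π)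
    fun x hx => hφ (Submodule.mem_map_of_mem hx)
  have hcoord : ∀ j, (y ᵥ* A) j = φ (π (Pi.single j 1)) := fun j => by
    simpa using hy (Pi.single j 1)
  refine hI ⟨y, ?_, fun j hj => ?_⟩
  · by_contra hempty
    have hzero : y ᵥ* A = 0 := by
      simpa [Set.not_nonempty_iff_eq_empty, Function.support_eq_empty_iff] using hempty
    refine hφ0 (LinearMap.ext fun u => ?_)
    obtain ⟨x, rfl⟩ := LinearMap.funLeft_surjective_of_injective F F _ Subtype.val_injective u
    simpa [hzero] using (hy x).symm
  · by_contra hjI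
    refine hj ((hcoord j).trans ?_)
    have hπ : π (Pi.single j 1) = 0 :=
      funext fun i => Pi.single_eq_of_ne (ne_of_mem_of_not_mem i.2 hjI) _
    simp [hπ]

end RowSpace

theorem div_eq_one_div_pow_of_mul_pow_eq {𝕜 : Type*} [Field 𝕜] [CharZero 𝕜] {a q e k : ℕ}
    (hk : k ≠ 0) (h : a * q ^ e = k) : (a : 𝕜) / k = (1 / q) ^ e := by
  have ha : a ≠ 0 := by rintro rfl; exact hk (by simp [← h])
  rw [← h, Nat.cast_mul, Nat.cast_pow, div_mul_cancel_left₀ (Nat.cast_ne_zero.2 ha),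
    _root_.one_div_pow, one_div]

theorem Matrix.card_filter_restrict_eq_mul_card_pow {F : Type*} [Field F] [Fintype F]
    {m n : Type*} [Fintype m] [Fintype n] [DecidableEq n] (A : Matrix m n F) {I : Finset n}
    (hI : ¬ IsRelation A I) (τ : n → F) :
    #{x | A *ᵥ x = 0 ∧ ∀ i ∈ I, x i = τ i} * Fintype.card F ^ #I =
      #{x | A *ᵥ x = 0} := by
  have hsurj : ∀ t : I → F, ∃ x, A *ᵥ x = 0 ∧ (fun i : I => x i) = t := fun t => by
    obtain ⟨x, hx, hxt⟩ := A.exists_mulVec_eq_zero_and_restrict_eq hI t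
    exact ⟨x, hx, funext hxt⟩
  have hcount := card_filter_mul_card_eq_of_forall_exists A.mulVecLin.toAddMonoidHom
    (LinearMap.funLeft F F ((↑) : I → n)).toAddMonoidHom hsurj (fun i => τ i)
  simpa [funext_iff] using hcount

/-- For a uniformly random element of the kernel of a matrix `A` over a finite field,
if `I` contains no frozen index and is not a relation of `A`, then the coordinates
indexed by `I` are mutually independent and uniform on the field. Probabilities of
the uniform distribution on `ker A` are expressed as ratios of cardinalities. -/
theorem stmt_4 {F : Type*} [Field F] [Fintype F] {m n : ℕ}
    (A : Matrix (Fin m) (Fin n) F)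
    (I : Finset (Fin n))
    (hfroz : ∀ i ∈ I, ¬ IsRelation A {i})
    (hrel : ¬ IsRelation A (↑I : Set (Fin n)))
    (K : Finset (Fin n → F))
    (hK : K = Finset.univ.filter fun x => A.mulVec x = 0) :
    (∀ i ∈ I, ∀ c : F,
        ((K.filter fun x => x i = c).card : ℝ) / K.card = 1 / Fintype.card F) ∧
      (∀ τ : Fin n → F,
        ((K.filter fun x => ∀ i ∈ I, x i = τ i).card : ℝ) / K.card
          = ∏ i ∈ I, ((K.filter fun x => x i = τ i).card : ℝ) / K.card) := by
  subst hK
  have hker : #{x | A *ᵥ x = 0} ≠ 0 := card_ne_zero.2 ⟨0, by simp⟩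
  have huniform : ∀ i ∈ I, ∀ c : F,
      (#{x ∈ {x | A *ᵥ x = 0} | x i = c} : ℝ) / #{x | A *ᵥ x = 0} = 1 / Fintype.card F := by
    intro i hi c
    have hcount := A.card_filter_restrict_eq_mul_card_pow (I := {i}) (by simpa using hfroz i hi)
      fun _ => c
    rw [filter_filter]
    simpa using div_eq_one_div_pow_of_mul_pow_eq (𝕜 := ℝ) (e := 1) hker
      (by simpa using hcount)
  refine ⟨huniform, fun τ => ?_⟩
  rw [prod_congr rfl fun i hi => huniform i hi (τ i), prod_const, filter_filter]
  exact div_eq_one_div_pow_of_mul_pow_eq hker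
    (by convert A.card_filter_restrict_eq_mul_card_pow hrel τ)
end

section
/- Let A be an m×n matrix over a field F with nullity N, let ξ_1,...,ξ_N ∈ F^n be a basis of ker(A), and let Ξ ∈ F^{n×N} be the matrix with columns ξ_1,...,ξ_N. If I ⊆ {1,...,n} is not a relation of A and contains no frozen index of A, then the rows (Ξ_i)_{i∈I} of Ξ are linearly independent, i.e., rank((Ξ_i)_{i∈I}) = |I|. -/
namespace Matrix

variable {F : Type*} [Field F] {m n : Type*} [Fintype m] [Fintype n]

theorem exists_vecMul_eq_of_forall_mem_ker_dotProduct_eq_zero (A : Matrix m n F) {c : n → F}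
    (hc : ∀ v ∈ LinearMap.ker A.mulVecLin, c ⬝ᵥ v = 0) : ∃ y, y ᵥ* A = c := by
  classical
  have hmem : dotProductEquiv F n c ∈ (LinearMap.ker A.mulVecLin).dualAnnihilator :=
    (Submodule.mem_dualAnnihilator _).2 hc
  rw [← LinearMap.range_dualMap_eq_dualAnnihilator_ker] at hmem
  obtain ⟨ψ, hψ⟩ := hmem
  refine ⟨(dotProductEquiv F m).symm ψ, (dotProductEquiv F n).injective (LinearMap.ext fun v => ?_)⟩
  rw [← hψ, dotProductEquiv_apply_apply, ← dotProduct_mulVec, LinearMap.dualMap_apply,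
    ← dotProductEquiv_apply_apply, LinearEquiv.apply_symm_apply, mulVecLin_apply]

theorem eq_zero_of_support_subset_of_not_isRelation {A : Matrix m n F} {I : Set n}
    (hI : ¬ IsRelation A I) {c : n → F} (hsupp : Function.support c ⊆ I)
    (hc : ∀ v ∈ LinearMap.ker A.mulVecLin, c ⬝ᵥ v = 0) : c = 0 := by
  obtain ⟨y, rfl⟩ := A.exists_vecMul_eq_of_forall_mem_ker_dotProduct_eq_zero hc
  by_contra h
  exact hI ⟨y, Function.support_nonempty_iff.2 h, hsupp⟩

theorem linearIndepOn_rows_of_not_isRelation {k : Type*} {A : Matrix m n F} {Ξ : Matrix n k F}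
    (hspan : Submodule.span F (Set.range Ξ.col) = LinearMap.ker A.mulVecLin) {I : Set n}
    (hI : ¬ IsRelation A I) : LinearIndepOn F Ξ.row I := by
  refine linearIndepOn_iff.2 fun l hl hcomb => Finsupp.coe_eq_zero.1 ?_
  classical
  have hvecMul : ⇑l ᵥ* Ξ = 0 := by
    rw [vecMul_eq_sum]
    change ∑ i, l i • Ξ.row i = 0
    rw [← Fintype.linearCombination_apply,
      ← Finsupp.linearCombination_eq_fintype_linearCombination_apply]
    simpa using hcomb
  have hspan_le : Submodule.span F (Set.range Ξ.col) ≤ LinearMap.ker (dotProductEquiv F n l) :=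
    Submodule.span_le.2 <| Set.range_subset_iff.2 fun j => congrFun hvecMul j
  exact eq_zero_of_support_subset_of_not_isRelation hI
    (by rwa [Finsupp.fun_support_eq]) fun v hv => hspan_le (hspan ▸ hv)

end Matrix

theorem stmt_5_general {F : Type*} [Field F] {m n N : ℕ}
    (A : Matrix (Fin m) (Fin n) F)
    (ξ : Fin N → (Fin n → F))
    (hspan : Submodule.span F (Set.range ξ) = LinearMap.ker A.mulVecLin)
    (Ξ : Matrix (Fin n) (Fin N) F) (hΞ : ∀ i j, Ξ i j = ξ j i)
    (I : Finset (Fin n))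
    (hrel : ¬ IsRelation A (↑I : Set (Fin n))) :
    (Ξ.submatrix (fun i : {x // x ∈ I} => (i : Fin n)) id).rank = I.card := by
  have hcol : Ξ.col = ξ := funext fun j => funext fun i => hΞ i j
  have hrows : LinearIndependent F (Ξ.submatrix (fun i : {x // x ∈ I} => (i : Fin n)) id).row :=
    Matrix.linearIndepOn_rows_of_not_isRelation (hcol ▸ hspan) hrel
  exact hrows.rank_matrix.trans (Fintype.card_coe I)

theorem stmt_5 {F : Type*} [Field F] {m n N : ℕ}
    (A : Matrix (Fin m) (Fin n) F)
    (hN : N = nullity A)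
    (ξ : Fin N → (Fin n → F))
    (hker : ∀ j, A.mulVec (ξ j) = 0)
    (hindep : LinearIndependent F ξ)
    (hspan : Submodule.span F (Set.range ξ) = LinearMap.ker A.mulVecLin)
    (Ξ : Matrix (Fin n) (Fin N) F) (hΞ : ∀ i j, Ξ i j = ξ j i)
    (I : Finset (Fin n))
    (hrel : ¬ IsRelation A (↑I : Set (Fin n)))
    (hfroz : ∀ i ∈ I, ¬ IsRelation A {i}) :
    (Ξ.submatrix (fun i : {x // x ∈ I} => (i : Fin n)) id).rank = I.card :=
  stmt_5_general A ξ hspan Ξ hΞ I hrel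
end

section
/- Let A be an m×n matrix over a field F and let A' be obtained from A by adding one extra row which has exactly one non-zero entry, equal to 1, in some column j. Then every frozen index of A is a frozen index of A', i.e., F(A) ⊆ F(A'); moreover |nul(A) − nul(A')| ≤ 1. -/
theorem stmt_6 {F : Type*} [Field F] [DecidableEq F] {m n : ℕ}
    (A : Matrix (Fin m) (Fin n) F) (j : Fin n)
    (A' : Matrix (Fin (m + 1)) (Fin n) F)
    (hA'old : ∀ i : Fin m, A' i.castSucc = A i)
    (hA'new : A' (Fin.last m) = Pi.single j 1) :
    frozen A ⊆ frozen A' ∧ |(nullity A : ℤ) - nullity A'| ≤ 1 := by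
  have hvm : ∀ y : Fin m → F, Matrix.vecMul (Fin.snoc y 0) A' = Matrix.vecMul y A := by
    intro y
    funext k
    simp [Matrix.vecMul, dotProduct, Fin.sum_univ_castSucc, hA'old]
  constructor
  · rintro i ⟨y, hne, hsub⟩
    exact ⟨Fin.snoc y 0, by rw [hvm]; exact hne, by rw [hvm]; exact hsub⟩
  · -- nullity part
    set K := LinearMap.ker A.mulVecLin
    have hker : LinearMap.ker A'.mulVecLin = K ⊓ LinearMap.ker (LinearMap.proj (R := F) (φ := fun _ : Fin n => F) j) := by
      ext x
      simp only [LinearMap.mem_ker, Submodule.mem_inf, Matrix.mulVecLin_apply, LinearMap.proj_apply]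
      constructor
      · intro h
        constructor
        · funext i
          have := congrFun h i.castSucc
          simpa [Matrix.mulVec, hA'old] using this
        · have := congrFun h (Fin.last m)
          simpa [Matrix.mulVec, hA'new, dotProduct, Pi.single_apply] using this
      · rintro ⟨h1, h2⟩
        funext i'
        refine Fin.lastCases ?_ ?_ i'
        · simpa [Matrix.mulVec, hA'new, dotProduct, Pi.single_apply] using h2
        · intro i
          have := congrFun h1 i
          simpa [Matrix.mulVec, hA'old] using this
    have hle : LinearMap.ker A'.mulVecLin ≤ K := by rw [hker]; exact inf_le_left
    set g := (LinearMap.proj (R := F) (φ := fun _ : Fin n => F) j).comp K.subtype with hg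
    have h1 : Module.finrank F (LinearMap.range g) + Module.finrank F (LinearMap.ker g) =
        Module.finrank F K := LinearMap.finrank_range_add_finrank_ker g
    have h2 : Module.finrank F (LinearMap.range g) ≤ 1 := by
      simpa using (LinearMap.range g).finrank_le
    have hk : LinearMap.ker g = Submodule.comap K.subtype (LinearMap.ker A'.mulVecLin) := by
      rw [hg, LinearMap.ker_comp, hker, Submodule.comap_inf]
      simp [Submodule.comap_subtype_self]
    have h3 : Module.finrank F (LinearMap.ker g) = nullity A' := by
      rw [hk]
      set_option synthInstance.maxHeartbeats 1000000 in
      exact (Submodule.comapSubtypeEquivOfLe hle).finrank_eq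
    have h4 : nullity A = Module.finrank F K := rfl
    rw [abs_sub_le_iff]
    omega
end

section
/- Let A be a matrix with n columns over a field F, let 2 ≤ h ≤ n, and suppose I ⊆ {1,...,n} with |I| = h is a minimal h-relation of A, i.e., I is a relation of A and no proper nonempty subset of I is a relation of A. Let v ∈ I and let A' be obtained from A by adding, for each i ∈ I \ {v}, a row with a single non-zero entry 1 in column i. Then v is frozen in A', i.e., {v} is a relation of A'. -/
theorem stmt_7 {F : Type*} [Field F] {m n : ℕ}
    (A : Matrix (Fin m) (Fin n) F)
    (h : ℕ) (hh2 : 2 ≤ h) (hhn : h ≤ n)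
    (I : Finset (Fin n)) (hcard : I.card = h)
    (hrel : IsRelation A (↑I : Set (Fin n)))
    (hmin : ∀ J : Finset (Fin n), J ⊆ I → J.Nonempty → J ≠ I →
      ¬ IsRelation A (↑J : Set (Fin n)))
    (v : Fin n) (hv : v ∈ I)
    (A' : Matrix (Fin m ⊕ {x // x ∈ I.erase v}) (Fin n) F)
    (hA'old : ∀ i : Fin m, A' (Sum.inl i) = A i)
    (hA'new : ∀ i : {x // x ∈ I.erase v}, ∀ j : Fin n,
      A' (Sum.inr i) j = if j = (i : Fin n) then 1 else 0) :
    IsRelation A' ({v} : Set (Fin n)) := by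
  classical
  obtain ⟨y, hne, hsub⟩ := hrel
  set w := Matrix.vecMul y A with hw
  -- every index of `I` is in the support of `w`
  have hJ : ∀ j ∈ I, w j ≠ 0 := by
    by_contra hcon
    push_neg at hcon
    obtain ⟨j0, hj0I, hj0⟩ := hcon
    set J := I.filter (fun j => w j ≠ 0) with hJdef
    have hJsub : J ⊆ I := Finset.filter_subset _ _
    have hJne : J.Nonempty := by
      obtain ⟨k, hk⟩ := hne
      exact ⟨k, Finset.mem_filter.2 ⟨hsub hk, hk⟩⟩
    have hJneq : J ≠ I := by
      intro hEq
      have : j0 ∈ J := hEq ▸ hj0I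
      exact (Finset.mem_filter.1 this).2 hj0
    exact hmin J hJsub hJne hJneq
      ⟨y, hne, fun k hk => Finset.mem_coe.2 (Finset.mem_filter.2 ⟨hsub hk, hk⟩)⟩
  -- the new candidate row vector
  set y' : Fin m ⊕ {x // x ∈ I.erase v} → F :=
    Sum.elim y (fun i => - w (i : Fin n)) with hy'
  have key : ∀ j, Matrix.vecMul y' A' j
      = w j + (if j ∈ I.erase v then - w j else 0) := by
    intro j
    have hsum2 : ∑ i : {x // x ∈ I.erase v}, (- w (i : Fin n)) * A' (Sum.inr i) j
        = if j ∈ I.erase v then - w j else 0 := by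
      have : ∀ i : {x // x ∈ I.erase v},
          (- w (i : Fin n)) * A' (Sum.inr i) j
            = if j = (i : Fin n) then - w j else 0 := by
        intro i
        rw [hA'new]
        by_cases hji : j = (i : Fin n)
        · simp [hji]
        · simp [hji]
      rw [Finset.sum_congr rfl (fun i _ => this i)]
      rw [Finset.sum_coe_sort (I.erase v) (fun i => if j = i then - w j else 0)]
      simp [Finset.sum_ite_eq]
    simp only [Matrix.vecMul, dotProduct, Fintype.sum_sum_type, hy', Sum.elim_inl,
      Sum.elim_inr, hsum2, hw]
    congr 1
    exact Finset.sum_congr rfl (fun i _ => by rw [hA'old])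
  refine ⟨y', ⟨v, ?_⟩, ?_⟩
  · rw [Function.mem_support, key]
    simp only [Finset.mem_erase, ne_eq, not_true_eq_false, false_and, if_false, add_zero]
    exact hJ v hv
  · intro j hj
    rw [Function.mem_support, key] at hj
    by_contra hjv
    have hjv' : j ≠ v := by simpa using hjv
    by_cases hje : j ∈ I.erase v
    · simp [hjv', (Finset.mem_erase.1 hje).2] at hj
    · have hjI : j ∉ I := fun hjI => hje (Finset.mem_erase.2 ⟨hjv', hjI⟩)
      have : w j = 0 := by
        by_contra hwj
        exact hjI (Finset.mem_coe.1 (hsub hwj))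
      simp [hje, this] at hj
end

section
/- For integers r ≥ 3 and real λ > 0, define h_r(x) = Σ_{j≥r} x^j/j! for x ≥ 0. Then the function t ↦ h_{r-2}(λt)/h_{r-3}(λt) = 1 − ((λt)^{r−3}/(r−3)!)/h_{r−3}(λt) is (strictly) increasing in t on (0, ∞). -/
/-!
Writing `h_s(x) = x^s · S_s(x)` with `S_s(x) = Σ_k x^k / (k+s)!`, the recursion
`h_s = x^s/s! + h_{s+1}` gives `h_{s+1}/h_s = 1 - 1/(s! · S_s)`, and `S_s` is a power series
with positive coefficients, hence positive and strictly increasing on `[0, ∞)`.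
-/

/-- The truncated exponential series `h_r(x) = Σ_{j ≥ r} x^j / j!`. -/
noncomputable def truncExp (r : ℕ) (x : ℝ) : ℝ :=
  ∑' j : ℕ, if r ≤ j then x ^ j / (Nat.factorial j) else 0

open Nat

lemma summable_truncExp_terms (r : ℕ) (x : ℝ) :
    Summable fun j : ℕ => if r ≤ j then x ^ j / (j ! : ℝ) else 0 :=
  ((Real.summable_pow_div_factorial x).indicator {j | r ≤ j}).congr fun j => by
    simp [Set.indicator_apply]

lemma summable_pow_add_div_factorial_add (r : ℕ) (x : ℝ) :
    Summable fun k : ℕ => x ^ (k + r) / ((k + r) ! : ℝ) :=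
  (summable_nat_add_iff r).mpr (Real.summable_pow_div_factorial x)

lemma truncExp_eq_tsum_nat_add (r : ℕ) (x : ℝ) :
    truncExp r x = ∑' k : ℕ, x ^ (k + r) / ((k + r) ! : ℝ) := by
  rw [truncExp, ← (summable_truncExp_terms r x).sum_add_tsum_nat_add r,
    Finset.sum_eq_zero fun j hj => if_neg (by simpa using hj), zero_add]
  simp

lemma truncExp_eq_add_truncExp_succ (r : ℕ) (x : ℝ) :
    truncExp r x = x ^ r / (r ! : ℝ) + truncExp (r + 1) x := by
  rw [truncExp_eq_tsum_nat_add, truncExp_eq_tsum_nat_add,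
    (summable_pow_add_div_factorial_add r x).tsum_eq_zero_add]
  simp only [zero_add, add_assoc, add_comm 1 r]

lemma truncExp_eq_pow_mul_tsum (r : ℕ) (x : ℝ) :
    truncExp r x = x ^ r * ∑' k : ℕ, x ^ k / ((k + r) ! : ℝ) := by
  rw [truncExp_eq_tsum_nat_add, ← tsum_mul_left]
  congr 1 with k
  ring

section PowDivFactorialAdd

variable (r : ℕ) {x : ℝ}

lemma summable_pow_div_factorial_add (hx : 0 ≤ x) :
    Summable fun k : ℕ => x ^ k / ((k + r) ! : ℝ) :=
  (Real.summable_pow_div_factorial x).of_nonneg_of_le (fun k => by positivity) fun k =>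
    div_le_div_of_nonneg_left (by positivity) (by positivity)
      (by exact_mod_cast Nat.factorial_le (Nat.le_add_right k r))

lemma tsum_pow_div_factorial_add_pos (hx : 0 ≤ x) :
    0 < ∑' k : ℕ, x ^ k / ((k + r) ! : ℝ) :=
  (summable_pow_div_factorial_add r hx).tsum_pos (fun k => by positivity) 0 (by simp; positivity)

lemma strictMonoOn_tsum_pow_div_factorial_add :
    StrictMonoOn (fun x : ℝ => ∑' k : ℕ, x ^ k / ((k + r) ! : ℝ)) (Set.Ici 0) := by
  intro a ha b hb hab
  refine (summable_pow_div_factorial_add r ha).tsum_lt_tsum (i := 1) (fun k => ?_) ?_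
    (summable_pow_div_factorial_add r hb)
  · exact div_le_div_of_nonneg_right (pow_le_pow_left₀ ha hab.le k) (by positivity)
  · exact div_lt_div_of_pos_right (by simpa using hab) (by positivity)

end PowDivFactorialAdd

lemma truncExp_succ_div_truncExp (r : ℕ) {x : ℝ} (hx : 0 < x) :
    truncExp (r + 1) x / truncExp r x = 1 - 1 / ((r ! : ℝ) * ∑' k : ℕ, x ^ k / ((k + r) ! : ℝ)) := by
  have hS := tsum_pow_div_factorial_add_pos r hx.le
  have hxr : x ^ r ≠ 0 := by positivity
  rw [eq_sub_of_add_eq' (truncExp_eq_add_truncExp_succ r x).symm, truncExp_eq_pow_mul_tsum]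
  field_simp

lemma strictMonoOn_truncExp_succ_div_truncExp (r : ℕ) :
    StrictMonoOn (fun x : ℝ => truncExp (r + 1) x / truncExp r x) (Set.Ioi 0) := by
  intro a ha b hb hab
  simp only [truncExp_succ_div_truncExp r ha, truncExp_succ_div_truncExp r hb]
  rw [Set.mem_Ioi] at ha hb
  have hSa := tsum_pow_div_factorial_add_pos r ha.le
  have hSab := strictMonoOn_tsum_pow_div_factorial_add r (Set.mem_Ici.2 ha.le)
    (Set.mem_Ici.2 hb.le) hab
  gcongr

/-- For `r ≥ 3` and `λ > 0`, the ratio `t ↦ h_{r-2}(λt) / h_{r-3}(λt)` of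
consecutive truncated exponential tails is strictly increasing on `(0, ∞)`. -/
theorem stmt_16 (r : ℕ) (hr : 3 ≤ r) (lam : ℝ) (hlam : 0 < lam) :
    StrictMonoOn (fun t : ℝ => truncExp (r - 2) (lam * t) / truncExp (r - 3) (lam * t))
      (Set.Ioi (0:ℝ)) := by
  obtain ⟨s, rfl⟩ : ∃ s, r = s + 3 := ⟨r - 3, by omega⟩
  have hscale : StrictMonoOn (fun t : ℝ => lam * t) (Set.Ioi 0) :=
    fun a _ b _ hab => mul_lt_mul_of_pos_left hab hlam
  have hmaps : Set.MapsTo (fun t : ℝ => lam * t) (Set.Ioi 0) (Set.Ioi 0) :=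
    fun t ht => mul_pos hlam ht
  simpa [Function.comp_def] using (strictMonoOn_truncExp_succ_div_truncExp s).comp hscale hmaps
end
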